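/- arXiv:gr-qc/0202094 — 8 statements merged into one kernel-verified Lean document; each statement's English description precedes it below -/
import Mathlib

section
/- Let E be a finite-dimensional real inner product space, let A be a linear isometry (orthogonal transformation) of E, and let a ∈ E. Then the infimum over x ∈ E of ‖A x + a − x‖ equals ‖P a‖, where P is the orthogonal projection of E onto the fixed subspace ker(A − id); moreover this infimum is attained at some x ∈ E. -/
/-!
Write `F = ker (A - 1)` for the fixed subspace. For `f ∈ F` we have
`⟪f, A x - x⟫ = ⟪A f, A x⟫ - ⟪f, x⟫ = 0`, so `range (A - 1) ⊆ Fᗮ`, and rank–nullity makes this an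
equality. Hence `A x + a - x` runs over the affine subspace `a + Fᗮ`, whose point of least norm is
the orthogonal projection of `a` onto `F`.
-/

namespace Submodule

variable {𝕜 E : Type*} [RCLike 𝕜] [NormedAddCommGroup E] [InnerProductSpace 𝕜 E]

theorem isLeast_norm_add_orthogonal (K : Submodule 𝕜 E) [K.HasOrthogonalProjection] (a : E) :
    IsLeast ((fun w => ‖a + w‖) '' Kᗮ) ‖(K.orthogonalProjectionOnto a : E)‖ := by
  constructor
  · refine ⟨-(a - K.starProjection a), neg_mem (K.sub_starProjection_mem_orthogonal a), ?_⟩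
    simp
  · rintro _ ⟨w, hw, rfl⟩
    calc ‖(K.orthogonalProjectionOnto a : E)‖ = ‖(K.orthogonalProjectionOnto (a + w) : E)‖ := by
          rw [map_add, K.orthogonalProjectionOnto_apply_of_mem_orthogonal hw, add_zero]
      _ ≤ ‖a + w‖ := K.norm_orthogonalProjectionOnto_apply_le _

end Submodule

namespace LinearIsometry

open scoped InnerProductSpace

variable {𝕜 E : Type*} [RCLike 𝕜] [NormedAddCommGroup E] [InnerProductSpace 𝕜 E]
  (A : E →ₗᵢ[𝕜] E)

theorem range_sub_id_le_orthogonal_ker :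
    LinearMap.range (A.toLinearMap - LinearMap.id) ≤
      (LinearMap.ker (A.toLinearMap - LinearMap.id))ᗮ := by
  rintro _ ⟨x, rfl⟩ f hf
  have hAf : A f = f := sub_eq_zero.mp hf
  calc ⟪f, A x - x⟫_𝕜 = ⟪A f, A x⟫_𝕜 - ⟪f, x⟫_𝕜 := by rw [inner_sub_right, hAf]
    _ = 0 := by rw [A.inner_map_map, sub_self]

theorem range_sub_id_eq_orthogonal_ker [FiniteDimensional 𝕜 E] :
    LinearMap.range (A.toLinearMap - LinearMap.id) =
      (LinearMap.ker (A.toLinearMap - LinearMap.id))ᗮ := by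
  refine Submodule.eq_of_le_of_finrank_eq A.range_sub_id_le_orthogonal_ker ?_
  have := LinearMap.finrank_range_add_finrank_ker (A.toLinearMap - LinearMap.id)
  have := (LinearMap.ker (A.toLinearMap - LinearMap.id)).finrank_add_finrank_orthogonal
  omega

end LinearIsometry

/-- For a linear isometry `A` of a finite-dimensional real inner product space `E` and a
vector `a ∈ E`, the infimum over `x ∈ E` of `‖A x + a - x‖` equals the norm of the
orthogonal projection of `a` onto the fixed subspace `ker (A - id)`, and this infimum is
attained (i.e. it is the least element of the set of values). -/
theorem inf_dist_affine_isometry_eq_norm_proj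
    (E : Type*) [NormedAddCommGroup E] [InnerProductSpace ℝ E] [FiniteDimensional ℝ E]
    (A : E ≃ₗᵢ[ℝ] E) (a : E) :
    IsLeast (Set.range fun x : E => ‖A x + a - x‖)
      ‖(Submodule.orthogonalProjectionOnto
          (LinearMap.ker ((A.toLinearEquiv : E →ₗ[ℝ] E) - LinearMap.id)) a : E)‖ := by
  set T : E →ₗ[ℝ] E := (A.toLinearEquiv : E →ₗ[ℝ] E) - LinearMap.id
  have hrange : LinearMap.range T = (LinearMap.ker T)ᗮ :=
    A.toLinearIsometry.range_sub_id_eq_orthogonal_ker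
  have hvalues :
      (Set.range fun x : E => ‖A x + a - x‖) = (fun w => ‖a + w‖) '' LinearMap.range T := by
    rw [LinearMap.coe_range, ← Set.range_comp]
    congr! 2 with x
    simp only [Function.comp_apply, T, LinearMap.sub_apply, LinearMap.id_apply, LinearEquiv.coe_coe,
      LinearIsometryEquiv.coe_toLinearEquiv]
    congr 1
    abel
  rw [hvalues, hrange]
  exact (LinearMap.ker T).isLeast_norm_add_orthogonal a
end

section
/- Let E be a finite-dimensional real inner product space, let A be a linear isometry of E, and let a ∈ E. The affine map g : x ↦ A x + a has a fixed point in E if and only if the orthogonal projection of a onto the fixed subspace ker(A − id) is zero. In particular, if that projection is nonzero, then g acts freely on E (has no fixed point). -/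
/-! Because `A` preserves the inner product, `⟪A x - x, v⟫ = ⟪x, A⁻¹ v - v⟫`, so the range of
`A - id` is the orthogonal complement of its kernel, the fixed subspace of `A`. On the other
hand `A x + a = x` says exactly that `a = (A - id) (-x)` lies in that range. -/

section

variable {𝕜 E : Type*} [RCLike 𝕜] [NormedAddCommGroup E] [InnerProductSpace 𝕜 E]

theorem LinearIsometryEquiv.orthogonal_range_sub_id (A : E ≃ₗᵢ[𝕜] E) :
    (LinearMap.range ((A.toLinearEquiv : E →ₗ[𝕜] E) - LinearMap.id))ᗮ =
      LinearMap.ker ((A.toLinearEquiv : E →ₗ[𝕜] E) - LinearMap.id) := by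
  ext v
  have hinner : ∀ x, inner 𝕜 (A x - x) v = inner 𝕜 x (A.symm v) - inner 𝕜 x v := fun x => by
    rw [inner_sub_left, A.inner_map_eq_flip]
  calc v ∈ (LinearMap.range ((A.toLinearEquiv : E →ₗ[𝕜] E) - LinearMap.id))ᗮ
      ↔ ∀ x, inner 𝕜 x (A.symm v) = inner 𝕜 x v := by
        simp only [Submodule.mem_orthogonal, LinearMap.mem_range, forall_exists_index,
          forall_apply_eq_imp_iff, LinearMap.sub_apply, LinearEquiv.coe_coe,
          LinearIsometryEquiv.coe_toLinearEquiv, LinearMap.id_coe, id_eq, hinner, sub_eq_zero]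
    _ ↔ A.symm v = v := ⟨ext_inner_left 𝕜, fun h x => by rw [h]⟩
    _ ↔ v ∈ LinearMap.ker ((A.toLinearEquiv : E →ₗ[𝕜] E) - LinearMap.id) := by
        rw [A.symm_apply_eq, eq_comm, ← sub_eq_zero]
        exact Iff.rfl

theorem LinearIsometryEquiv.orthogonal_ker_sub_id [FiniteDimensional 𝕜 E] (A : E ≃ₗᵢ[𝕜] E) :
    (LinearMap.ker ((A.toLinearEquiv : E →ₗ[𝕜] E) - LinearMap.id))ᗮ =
      LinearMap.range ((A.toLinearEquiv : E →ₗ[𝕜] E) - LinearMap.id) := by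
  rw [← A.orthogonal_range_sub_id, Submodule.orthogonal_orthogonal]

end

theorem LinearMap.exists_add_eq_self_iff_mem_range_sub_id {R M : Type*} [Ring R] [AddCommGroup M]
    [Module R M] (f : M →ₗ[R] M) (a : M) :
    (∃ x, f x + a = x) ↔ a ∈ LinearMap.range (f - LinearMap.id) := by
  refine ⟨fun ⟨x, hx⟩ => ⟨-x, ?_⟩, fun ⟨x, hx⟩ => ⟨-x, ?_⟩⟩
  · rw [eq_sub_of_add_eq' hx]
    simp only [LinearMap.sub_apply, map_neg, LinearMap.id_apply]
    abel
  · simp only [LinearMap.sub_apply, LinearMap.id_apply] at hx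
    rw [map_neg, ← hx]
    abel

/-- For a linear isometry `A` of a finite-dimensional real inner product space `E` and
`a ∈ E`, the affine map `g : x ↦ A x + a` has a fixed point iff the orthogonal projection
of `a` onto the fixed subspace `ker (A - id)` vanishes; in particular, if that projection
is nonzero then `g` has no fixed point (acts freely). -/
theorem affine_isometry_has_fixed_point_iff_proj_eq_zero
    (E : Type*) [NormedAddCommGroup E] [InnerProductSpace ℝ E] [FiniteDimensional ℝ E]
    (A : E ≃ₗᵢ[ℝ] E) (a : E) :
    ((∃ x : E, A x + a = x) ↔
      Submodule.orthogonalProjectionOnto (LinearMap.ker ((A.toLinearEquiv : E →ₗ[ℝ] E) - LinearMap.id)) a = 0)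
    ∧ (Submodule.orthogonalProjectionOnto
          (LinearMap.ker ((A.toLinearEquiv : E →ₗ[ℝ] E) - LinearMap.id)) a ≠ 0 →
        ∀ x : E, A x + a ≠ x) := by
  have hfix : (∃ x : E, A x + a = x) ↔
      Submodule.orthogonalProjectionOnto
        (LinearMap.ker ((A.toLinearEquiv : E →ₗ[ℝ] E) - LinearMap.id)) a = 0 := by
    rw [Submodule.orthogonalProjectionOnto_eq_zero_iff, A.orthogonal_ker_sub_id]
    exact (A.toLinearEquiv : E →ₗ[ℝ] E).exists_add_eq_self_iff_mem_range_sub_id a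
  exact ⟨hfix, fun hne x hx => hne (hfix.1 ⟨x, hx⟩)⟩
end

section
/- Let E be a real inner product space, let D be a linear isometry of E, and let a, b, c ∈ E satisfy D a = a, D b = c and D c = c − b. Then ‖b‖ = ‖c‖, ⟪a,b⟫ = 0, ⟪a,c⟫ = 0, and 2⟪b,c⟫ = ‖c‖² (so b and c have equal lengths and make a fixed angle with cosine 1/2, and a is orthogonal to both). -/
open scoped RealInnerProductSpace

namespace LinearIsometry

variable {E : Type*} [NormedAddCommGroup E] [InnerProductSpace ℝ E] (D : E →ₗᵢ[ℝ] E)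

theorem inner_apply_right_of_apply_eq_self {a : E} (ha : D a = a) (x : E) :
    ⟪a, D x⟫ = ⟪a, x⟫ := by
  simpa only [ha] using D.inner_map_map a x

theorem inner_eq_zero_of_apply_eq_self_of_apply_eq_sub {a b c : E} (ha : D a = a)
    (hb : D b = c) (hc : D c = c - b) : ⟪a, b⟫ = 0 := by
  have hab : ⟪a, c⟫ = ⟪a, b⟫ := by
    rw [← hb, D.inner_apply_right_of_apply_eq_self ha]
  have hac : ⟪a, c - b⟫ = ⟪a, c⟫ := by
    rw [← hc, D.inner_apply_right_of_apply_eq_self ha]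
  rw [inner_sub_right] at hac
  linarith

theorem two_mul_inner_eq_norm_sq_of_apply_eq_sub {b c : E} (hb : D b = c)
    (hc : D c = c - b) : 2 * ⟪b, c⟫ = ‖c‖ ^ 2 := by
  have h : ⟪c, c - b⟫ = ⟪b, c⟫ := by
    rw [← hc, ← hb, D.inner_map_map]
  rw [inner_sub_right, real_inner_self_eq_norm_sq, real_inner_comm b c] at h
  linarith

end LinearIsometry

/-- Class 𝒢₅ constraint: if a linear isometry `D` of a real inner product space satisfies
`D a = a`, `D b = c` and `D c = c - b`, then `‖b‖ = ‖c‖`, `a ⊥ b`, `a ⊥ c`, and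
`2⟪b,c⟫ = ‖c‖²` (the angle between `b` and `c` has cosine `1/2`). -/
theorem G5_basis_constraints
    (E : Type*) [NormedAddCommGroup E] [InnerProductSpace ℝ E]
    (D : E ≃ₗᵢ[ℝ] E) (a b c : E)
    (ha : D a = a) (hb : D b = c) (hc : D c = c - b) :
    ‖b‖ = ‖c‖ ∧ ⟪a, b⟫ = 0 ∧ ⟪a, c⟫ = 0 ∧ 2 * ⟪b, c⟫ = ‖c‖ ^ 2 := by
  let L := D.toLinearIsometry
  have hab : ⟪a, b⟫ = 0 := L.inner_eq_zero_of_apply_eq_self_of_apply_eq_sub ha hb hc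
  have hac : ⟪a, c⟫ = ⟪a, b⟫ := by
    rw [← hb]
    exact L.inner_apply_right_of_apply_eq_self ha b
  refine ⟨by rw [← hb, D.norm_map], hab, hac.trans hab, ?_⟩
  exact L.two_mul_inner_eq_norm_sq_of_apply_eq_sub hb hc
end

section
/- With Γ the 𝒢₆ covering group described in the context, Γ acts freely on E: every element of Γ other than the identity has no fixed point in E. -/
/-!
Every element of `Γ` has the form `x ↦ D x + ∑ nᵢ sᵢ eᵢ` with `n ∈ ℤ³`, `s = (α, β, γ)`, and
linear part `D = diag(ε₀, ε₁, ε₂)` read off from the parities of `n`: `ε₀ = (-1)^n₁`,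
`ε₁ = (-1)^n₀`, `ε₂ = ε₀ ε₁`, subject to `n₁ ≡ n₂ (mod 2)`. These maps form a group containing
the three generators. At a fixed point, `nᵢ = 0` wherever `εᵢ = 1`; chasing the parity relations
this forces `n = 0`, i.e. the motion is the identity.
-/

local notation "ℝ³" => EuclideanSpace ℝ (Fin 3)

lemma Int.negOnePow_units_mul (u : ℤˣ) (m : ℤ) : ((u : ℤ) * m).negOnePow = m.negOnePow := by
  rcases Int.units_eq_one_or u with rfl | rfl <;> simp [Int.negOnePow_neg]

namespace G6

def linearSign (n : Fin 3 → ℤ) : Fin 3 → ℤˣ :=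
  ![(n 1).negOnePow, (n 0).negOnePow, (n 0 + n 1).negOnePow]

def IsMotion (s : Fin 3 → ℝ) (n : Fin 3 → ℤ) (g : ℝ³ ≃ᵢ ℝ³) : Prop :=
  ∀ x i, g x i = (linearSign n i : ℤ) * x i + n i * s i

def compTranslation (n m : Fin 3 → ℤ) : Fin 3 → ℤ := fun i => linearSign n i * m i + n i

def invTranslation (n : Fin 3 → ℤ) : Fin 3 → ℤ := fun i => -(linearSign n i * n i)

variable {s : Fin 3 → ℝ} {n m : Fin 3 → ℤ} {g h : ℝ³ ≃ᵢ ℝ³}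

lemma linearSign_zero : linearSign 0 = 1 := by
  funext i
  fin_cases i <;> rfl

lemma isMotion_zero_iff : IsMotion s 0 g ↔ g = 1 := by
  simp only [IsMotion, linearSign_zero, Pi.one_apply, Units.val_one, Int.cast_one, one_mul,
    Pi.zero_apply, Int.cast_zero, zero_mul, add_zero]
  exact ⟨fun h => IsometryEquiv.ext fun x => PiLp.ext (h x), fun h x i => by rw [h]; rfl⟩

lemma linearSign_compTranslation (n m : Fin 3 → ℤ) :
    linearSign (compTranslation n m) = linearSign n * linearSign m := by
  funext i
  fin_cases i <;>
    simp [linearSign, compTranslation, Int.negOnePow_add, Int.negOnePow_units_mul] <;>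
    ac_rfl

lemma IsMotion.mul (hg : IsMotion s n g) (hh : IsMotion s m h) :
    IsMotion s (compTranslation n m) (g * h) := by
  intro x i
  rw [IsometryEquiv.mul_apply, hg, hh, linearSign_compTranslation, Pi.mul_apply, compTranslation]
  push_cast
  ring

lemma linearSign_invTranslation (n : Fin 3 → ℤ) :
    linearSign (invTranslation n) = linearSign n := by
  funext i
  fin_cases i <;>
    simp [linearSign, invTranslation, Int.negOnePow_add, Int.negOnePow_neg,
      Int.negOnePow_units_mul]

lemma IsMotion.inv (hg : IsMotion s n g) : IsMotion s (invTranslation n) g⁻¹ := by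
  intro x i
  have hx := hg (g⁻¹ x) i
  rw [show g (g⁻¹ x) = x from g.apply_symm_apply x] at hx
  have hsq : ((linearSign n i : ℤ) : ℝ) * (linearSign n i : ℤ) = 1 := by
    rw [← Int.cast_mul, ← Units.val_mul, Int.units_mul_self, Units.val_one, Int.cast_one]
  rw [linearSign_invTranslation, invTranslation, hx]
  push_cast
  linear_combination -(g⁻¹ x i) * hsq

def coveringGroup (s : Fin 3 → ℝ) : Subgroup (ℝ³ ≃ᵢ ℝ³) where
  carrier := {g | ∃ n, (n 1).negOnePow = (n 2).negOnePow ∧ IsMotion s n g}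
  one_mem' := ⟨0, rfl, isMotion_zero_iff.mpr rfl⟩
  mul_mem' := by
    rintro g h ⟨n, hn, hg⟩ ⟨m, hm, hh⟩
    refine ⟨compTranslation n m, ?_, hg.mul hh⟩
    simp [compTranslation, Int.negOnePow_add, Int.negOnePow_units_mul, hn, hm]
  inv_mem' := by
    rintro g ⟨n, hn, hg⟩
    refine ⟨_, ?_, hg.inv⟩
    simpa [invTranslation, Int.negOnePow_neg, Int.negOnePow_units_mul] using hn

lemma IsMotion.translation_eq_zero_of_apply_eq_self (hg : IsMotion s n g) (hs : ∀ i, s i ≠ 0)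
    {x : ℝ³} (hx : g x = x) {i : Fin 3} (hi : linearSign n i = 1) : n i = 0 := by
  have := hg x i
  rw [hx, hi] at this
  simpa [hs i] using this

lemma IsMotion.eq_zero_of_apply_eq_self (hg : IsMotion s n g) (hs : ∀ i, s i ≠ 0)
    (hn : (n 1).negOnePow = (n 2).negOnePow) {x : ℝ³} (hx : g x = x) : n = 0 := by
  have key : ∀ i, linearSign n i = 1 → n i = 0 :=
    fun i => hg.translation_eq_zero_of_apply_eq_self hs hx
  rcases Int.even_or_odd (n 0) with h0 | h0
  · have hn1 : n 1 = 0 := key 1 (Int.negOnePow_even _ h0)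
    have hn0 : n 0 = 0 := key 0 (by simp [linearSign, hn1])
    have hn2 : n 2 = 0 := key 2 (by simp [linearSign, hn0, hn1])
    funext i
    fin_cases i <;> assumption
  · exfalso
    rcases Int.even_or_odd (n 1) with h1 | h1
    · have hn0 : n 0 = 0 := key 0 (Int.negOnePow_even _ h1)
      simp [hn0] at h0
    · have hn2 : n 2 = 0 := key 2 (Int.negOnePow_even _ (h0.add_odd h1))
      rw [hn2, Int.negOnePow_zero, Int.negOnePow_odd _ h1] at hn
      exact absurd hn (by decide)

theorem apply_ne_self_of_mem_coveringGroup (hs : ∀ i, s i ≠ 0) (hgΓ : g ∈ coveringGroup s)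
    (hne : g ≠ 1) (x : ℝ³) : g x ≠ x := by
  obtain ⟨n, hn, hg⟩ := hgΓ
  intro hx
  obtain rfl := hg.eq_zero_of_apply_eq_self hs hn hx
  exact hne (isMotion_zero_iff.mp hg)

end G6

open G6 in
/-- The covering group `Γ` of a flat 3-manifold of class 𝒢₆ acts freely on Euclidean 3-space: every element of `Γ` other than the identity has no fixed point. -/
theorem G6_acts_freely
    (α β γ : ℝ) (hα : 0 < α) (hβ : 0 < β) (hγ : 0 < γ)
    (a b c : EuclideanSpace ℝ (Fin 3))
    (ha : a = α • EuclideanSpace.single (0 : Fin 3) (1 : ℝ))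
    (hb : b = β • EuclideanSpace.single (1 : Fin 3) (1 : ℝ))
    (hc : c = γ • EuclideanSpace.single (2 : Fin 3) (1 : ℝ))
    (A₁ A₂ A₃ : EuclideanSpace ℝ (Fin 3) ≃ₗᵢ[ℝ] EuclideanSpace ℝ (Fin 3))
    (hA₁ : ∀ (x : EuclideanSpace ℝ (Fin 3)) (i : Fin 3),
      A₁ x i = if i = 0 then x i else -x i)
    (hA₂ : ∀ (x : EuclideanSpace ℝ (Fin 3)) (i : Fin 3),
      A₂ x i = if i = 1 then x i else -x i)
    (hA₃ : ∀ (x : EuclideanSpace ℝ (Fin 3)) (i : Fin 3),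
      A₃ x i = if i = 2 then x i else -x i)
    (g₁ g₂ g₃ : EuclideanSpace ℝ (Fin 3) ≃ᵢ EuclideanSpace ℝ (Fin 3))
    (hg₁ : ∀ x, g₁ x = A₁ x + a)
    (hg₂ : ∀ x, g₂ x = A₂ x + (b + c))
    (hg₃ : ∀ x, g₃ x = A₃ x + (a + b + c))
    (Γ : Subgroup (EuclideanSpace ℝ (Fin 3) ≃ᵢ EuclideanSpace ℝ (Fin 3)))
    (hΓ : Γ = Subgroup.closure {g₁, g₂, g₃}) :
    ∀ g ∈ Γ, g ≠ 1 → ∀ x : EuclideanSpace ℝ (Fin 3), g x ≠ x := by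
  set s : Fin 3 → ℝ := ![α, β, γ]
  have hs : ∀ i, s i ≠ 0 := by
    intro i
    fin_cases i <;> simp [s, hα.ne', hβ.ne', hγ.ne']
  have h₁ : g₁ ∈ coveringGroup s := ⟨![1, 0, 0], rfl, fun x i => by
    fin_cases i <;> simp [hg₁, hA₁, ha, s, linearSign]⟩
  have h₂ : g₂ ∈ coveringGroup s := ⟨![0, 1, 1], rfl, fun x i => by
    fin_cases i <;> simp [hg₂, hA₂, hb, hc, s, linearSign]⟩
  have h₃ : g₃ ∈ coveringGroup s := ⟨![1, 1, 1], rfl, fun x i => by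
    fin_cases i <;> simp [hg₃, hA₃, ha, hb, hc, s, linearSign]⟩
  have hΓs : Γ ≤ coveringGroup s := by
    rw [hΓ, Subgroup.closure_le]
    simp [Set.insert_subset_iff, h₁, h₂, h₃]
  exact fun g hg => apply_ne_self_of_mem_coveringGroup hs (hΓs hg)
end

section
/- With Γ the 𝒢₆ covering group described in the context, the infimum, over all g ∈ Γ with g ≠ id and all x ∈ E, of the distance dist(x, g x) equals min{α, β, γ}, and this infimum is attained. Equivalently, the length of the smallest closed geodesic of the flat manifold E/Γ is min{|a|, |b|, |c|}, so its injectivity radius is r_inj = (1/2) min{|a|, |b|, |c|}. -/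
open scoped RealInnerProductSpace

/-! Every element of `Γ` acts coordinatewise as `xᵢ ↦ εᵢ xᵢ + kᵢ sᵢ` with `s = (α, β, γ)`,
`k ∈ ℤ³`, `k₁ ≡ k₂ (mod 2)`, and rotation signs `ε = ((-1)^k₁, (-1)^k₀, (-1)^(k₀+k₁))` fixed by
the parities of `k`; this description holds for the generators and is stable under composition
and inversion. If `g ≠ 1`, the parity constraints force an axis `i` with `εᵢ = 1` and `kᵢ ≠ 0`,
along which `x - g x` has length `|kᵢ| sᵢ ≥ min s`. The bound is attained by `g₁` at `0`, `g₂` at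
`c/2` and `g₃` at `(a + b)/2`, where they act as the translations by `a`, `b` and `c`. -/

namespace G6

local notation "E" => EuclideanSpace ℝ (Fin 3)

lemma _root_.Int.negOnePow_units_mul_s16 (u : ℤˣ) (n : ℤ) : ((u : ℤ) * n).negOnePow = n.negOnePow := by
  rcases Int.units_eq_one_or u with rfl | rfl
  · rw [Units.val_one, one_mul]
  · rw [Units.val_neg, Units.val_one, neg_one_mul, Int.negOnePow_neg]

def rotationSigns (k : Fin 3 → ℤ) : Fin 3 → ℤˣ :=
  ![(k 1).negOnePow, (k 0).negOnePow, (k 0 + k 1).negOnePow]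

def IsG6Motion (s : Fin 3 → ℝ) (g : E ≃ᵢ E) : Prop :=
  ∃ k : Fin 3 → ℤ, (k 1).negOnePow = (k 2).negOnePow ∧
    ∀ x i, g x i = (rotationSigns k i : ℤ) * x i + k i * s i

lemma rotationSigns_mul (k l : Fin 3 → ℤ) :
    rotationSigns (fun i => rotationSigns k i * l i + k i) = rotationSigns k * rotationSigns l := by
  ext i : 1
  fin_cases i <;> simp [rotationSigns, Int.negOnePow_add, Int.negOnePow_units_mul_s16] <;> ac_rfl

lemma rotationSigns_inv (k : Fin 3 → ℤ) :
    rotationSigns (fun i => -(rotationSigns k i * k i)) = rotationSigns k := by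
  ext i : 1
  fin_cases i <;>
    simp [rotationSigns, Int.negOnePow_neg, Int.negOnePow_add, Int.negOnePow_units_mul_s16]

lemma rotationSigns_zero : rotationSigns 0 = 1 := by
  ext i : 1
  fin_cases i <;> rfl

lemma isG6Motion_one (s : Fin 3 → ℝ) : IsG6Motion s 1 :=
  ⟨0, rfl, fun x i => by simp [rotationSigns_zero]⟩

lemma IsG6Motion.mul {s : Fin 3 → ℝ} {g h : E ≃ᵢ E} (hg : IsG6Motion s g) (hh : IsG6Motion s h) :
    IsG6Motion s (g * h) := by
  obtain ⟨k, hk, hgk⟩ := hg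
  obtain ⟨l, hl, hhl⟩ := hh
  refine ⟨fun i => rotationSigns k i * l i + k i, ?_, fun x i => ?_⟩
  · simp only [Int.negOnePow_add, Int.negOnePow_units_mul_s16, hk, hl]
  · rw [rotationSigns_mul, IsometryEquiv.mul_apply, hgk, hhl, Pi.mul_apply, Units.val_mul]
    push_cast
    ring

lemma IsG6Motion.inv {s : Fin 3 → ℝ} {g : E ≃ᵢ E} (hg : IsG6Motion s g) :
    IsG6Motion s g⁻¹ := by
  obtain ⟨k, hk, hgk⟩ := hg
  refine ⟨fun i => -(rotationSigns k i * k i), ?_, fun x i => ?_⟩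
  · simp only [Int.negOnePow_neg, Int.negOnePow_units_mul_s16, hk]
  · have hx := hgk (g⁻¹ x) i
    rw [IsometryEquiv.apply_inv_self] at hx
    have hsq : ((rotationSigns k i : ℤ) : ℝ) * (rotationSigns k i : ℤ) = 1 := by
      norm_cast; rw [Int.units_mul_self, Units.val_one]
    rw [rotationSigns_inv]
    push_cast
    linear_combination -((rotationSigns k i : ℤ) : ℝ) * hx - g⁻¹ x i * hsq

def g6Motions (s : Fin 3 → ℝ) : Subgroup (E ≃ᵢ E) where
  carrier := {g | IsG6Motion s g}
  one_mem' := isG6Motion_one s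
  mul_mem' := IsG6Motion.mul
  inv_mem' := IsG6Motion.inv

lemma exists_rotationSigns_eq_one {k : Fin 3 → ℤ} (hk : (k 1).negOnePow = (k 2).negOnePow)
    (hk0 : k ≠ 0) : ∃ i, rotationSigns k i = 1 ∧ k i ≠ 0 := by
  have odd_ne_zero {n : ℤ} (hn : Odd n) : n ≠ 0 := by rintro rfl; simp at hn
  rcases Int.even_or_odd (k 0) with h0 | h0 <;> rcases Int.even_or_odd (k 1) with h1 | h1
  · obtain ⟨i, hi⟩ := Function.ne_iff.mp hk0
    refine ⟨i, ?_, hi⟩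
    fin_cases i <;> simp [rotationSigns, Int.negOnePow_even, h0, h1, h0.add h1]
  · exact ⟨1, by simp [rotationSigns, Int.negOnePow_even, h0], odd_ne_zero h1⟩
  · exact ⟨0, by simp [rotationSigns, Int.negOnePow_even, h1], odd_ne_zero h0⟩
  · have h2 : Odd (k 2) := by
      rwa [← Int.negOnePow_eq_neg_one_iff, ← hk, Int.negOnePow_eq_neg_one_iff]
    exact ⟨2, by simp [rotationSigns, Int.negOnePow_even, h0.add_odd h1], odd_ne_zero h2⟩

lemma IsG6Motion.min_le_dist {s : Fin 3 → ℝ} (hs : ∀ i, 0 ≤ s i) {g : E ≃ᵢ E}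
    (hg : IsG6Motion s g) (hg1 : g ≠ 1) (x : E) :
    min (s 0) (min (s 1) (s 2)) ≤ dist x (g x) := by
  obtain ⟨k, hk, hgk⟩ := hg
  have hk0 : k ≠ 0 := by
    rintro rfl
    exact hg1 (IsometryEquiv.ext fun x => PiLp.ext fun i => by simp [hgk, rotationSigns_zero])
  obtain ⟨i, hεi, hki⟩ := exists_rotationSigns_eq_one hk hk0
  have hki : (1 : ℝ) ≤ |(k i : ℝ)| := by exact_mod_cast Int.one_le_abs hki
  calc min (s 0) (min (s 1) (s 2)) ≤ s i := by
        fin_cases i <;> simp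
    _ ≤ |(k i : ℝ)| * s i := le_mul_of_one_le_left (hs i) hki
    _ = dist (x i) (g x i) := by
        rw [Real.dist_eq, hgk, hεi, abs_sub_comm]; simp [abs_mul, abs_of_nonneg (hs i)]
    _ ≤ dist x (g x) := PiLp.dist_apply_le x (g x) i

lemma apply_eq_neg_of_apply_eq_zero {ι : Type*} [DecidableEq ι]
    {A : EuclideanSpace ℝ ι → EuclideanSpace ℝ ι} {j : ι}
    (hA : ∀ x i, A x i = if i = j then x i else -x i) {v : EuclideanSpace ℝ ι} (hv : v j = 0) :
    A v = -v := by
  ext i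
  rw [hA]
  split_ifs with hij
  · subst hij; simp [hv]
  · rfl

end G6

open G6

/-- For the covering group `Γ` of a flat 3-manifold of class 𝒢₆, the infimum over `g ∈ Γ`, `g ≠ 1`, and `x` of `dist x (g x)` equals `min {α, β, γ} = min {|a|,|b|,|c|}`, and it is attained; hence the injectivity radius is half this value. -/
theorem G6_injectivity_radius
    (α β γ : ℝ) (hα : 0 < α) (hβ : 0 < β) (hγ : 0 < γ)
    (a b c : EuclideanSpace ℝ (Fin 3))
    (ha : a = α • EuclideanSpace.single (0 : Fin 3) (1 : ℝ))
    (hb : b = β • EuclideanSpace.single (1 : Fin 3) (1 : ℝ))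
    (hc : c = γ • EuclideanSpace.single (2 : Fin 3) (1 : ℝ))
    (A₁ A₂ A₃ : EuclideanSpace ℝ (Fin 3) ≃ₗᵢ[ℝ] EuclideanSpace ℝ (Fin 3))
    (hA₁ : ∀ (x : EuclideanSpace ℝ (Fin 3)) (i : Fin 3),
      A₁ x i = if i = 0 then x i else -x i)
    (hA₂ : ∀ (x : EuclideanSpace ℝ (Fin 3)) (i : Fin 3),
      A₂ x i = if i = 1 then x i else -x i)
    (hA₃ : ∀ (x : EuclideanSpace ℝ (Fin 3)) (i : Fin 3),
      A₃ x i = if i = 2 then x i else -x i)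
    (g₁ g₂ g₃ : EuclideanSpace ℝ (Fin 3) ≃ᵢ EuclideanSpace ℝ (Fin 3))
    (hg₁ : ∀ x, g₁ x = A₁ x + a)
    (hg₂ : ∀ x, g₂ x = A₂ x + (b + c))
    (hg₃ : ∀ x, g₃ x = A₃ x + (a + b + c))
    (Γ : Subgroup (EuclideanSpace ℝ (Fin 3) ≃ᵢ EuclideanSpace ℝ (Fin 3)))
    (hΓ : Γ = Subgroup.closure {g₁, g₂, g₃}) :
    IsLeast {d : ℝ | ∃ g ∈ Γ, g ≠ 1 ∧ ∃ x : EuclideanSpace ℝ (Fin 3), d = dist x (g x)} (min α (min β γ)) := by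
  set S := {d : ℝ | ∃ g ∈ Γ, g ≠ 1 ∧ ∃ x : EuclideanSpace ℝ (Fin 3), d = dist x (g x)}
  have hΓs : Γ ≤ g6Motions ![α, β, γ] := by
    rw [hΓ, Subgroup.closure_le]
    rintro g (rfl | rfl | rfl)
    · exact ⟨![1, 0, 0], rfl, fun x i => by fin_cases i <;> simp [rotationSigns, hg₁, hA₁, ha]⟩
    · exact ⟨![0, 1, 1], rfl, fun x i => by fin_cases i <;> simp [rotationSigns, hg₂, hA₂, hb, hc]⟩
    · exact ⟨![1, 1, 1], rfl, fun x i => by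
        fin_cases i <;> simp [rotationSigns, hg₃, hA₃, ha, hb, hc, Int.negOnePow_even]⟩
  have mem_Γ {g} (hg : g ∈ ({g₁, g₂, g₃} : Set _)) : g ∈ Γ := hΓ ▸ Subgroup.subset_closure hg
  have translation_mem {g} (hg : g ∈ Γ) {x w} (hgx : g x = x + w) (hw : 0 < ‖w‖) : ‖w‖ ∈ S := by
    refine ⟨g, hg, fun h1 => ?_, x, by rw [hgx, dist_self_add_right]⟩
    simp [h1, eq_comm (a := x)] at hgx
    simp [hgx] at hw
  have hg₁α : g₁ 0 = 0 + a := by rw [hg₁, map_zero]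
  have hg₂β : g₂ ((2 : ℝ)⁻¹ • c) = (2 : ℝ)⁻¹ • c + b := by
    rw [hg₂, map_smul, apply_eq_neg_of_apply_eq_zero hA₂ (by simp [hc])]
    module
  have hg₃γ : g₃ ((2 : ℝ)⁻¹ • (a + b)) = (2 : ℝ)⁻¹ • (a + b) + c := by
    rw [hg₃, map_smul, apply_eq_neg_of_apply_eq_zero hA₃ (by simp [ha, hb])]
    module
  refine ⟨min_rec' (· ∈ S) ?_ (min_rec' _ ?_ ?_), ?_⟩
  · simpa [ha, norm_smul, abs_of_pos hα, hα] using translation_mem (mem_Γ (by simp)) hg₁α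
  · simpa [hb, norm_smul, abs_of_pos hβ, hβ] using translation_mem (mem_Γ (by simp)) hg₂β
  · simpa [hc, norm_smul, abs_of_pos hγ, hγ] using translation_mem (mem_Γ (by simp)) hg₃γ
  · rintro d ⟨g, hg, hg1, x, rfl⟩
    simpa using (hΓs hg).min_le_dist (fun i => by fin_cases i <;> simp [hα.le, hβ.le, hγ.le]) hg1 x
end

section
/- With Γ the 𝒢₆ covering group described in the context, the orbit of the origin under Γ, i.e. the set {g(0) : g ∈ Γ} ⊆ E, equals the lattice generated by the three vectors a, b + c and b − c, i.e. the ℤ-submodule {n₁ a + n₂ (b + c) + n₃ (b − c) : n₁, n₂, n₃ ∈ ℤ}. -/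
/-!
Each generator `gᵢ` is an affine map `x ↦ Aᵢ x + tᵢ` whose linear part is a coordinate sign
change, hence an involution sending `a`, `b + c`, `b - c` to `±a`, `±(b + c)`, `±(b - c)`, and
whose translation part lies in the lattice `L` generated by these three vectors. So every element
of `Γ` maps `L` onto itself, and the orbit of `0` lies in `L`. Conversely, `g₁²`, `g₂²`, `g₃²`
are the translations by `2a`, `2b`, `2c`, and `L` is covered by the translates of
`2ℤa + 2ℤb + 2ℤc` through the four orbit points `0`, `g₁ 0 = a`, `g₂ 0 = b + c` and
`g₃ 0 = a + b + c`.
-/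

open Function Set

section SignFlip

variable {ι : Type*} [DecidableEq ι] {A : EuclideanSpace ℝ ι → EuclideanSpace ℝ ι} {j : ι}

theorem signFlip_apply_smul_single (hA : ∀ x i, A x i = if i = j then x i else -x i)
    (k : ι) (r : ℝ) :
    A (r • EuclideanSpace.single k 1) =
      if k = j then r • EuclideanSpace.single k 1 else -(r • EuclideanSpace.single k 1) := by
  ext i
  rw [hA]
  by_cases hi : i = k
  · subst hi; split_ifs <;> simp
  · split_ifs <;> simp [hi]

theorem signFlip_involutive (hA : ∀ x i, A x i = if i = j then x i else -x i) : Involutive A :=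
  fun x => by ext i; simp only [hA]; split_ifs <;> simp

end SignFlip

section Lattice

variable {V : Type*} [AddCommGroup V]

theorem mem_closure_triple {u v w x : V} :
    x ∈ AddSubgroup.closure {u, v, w} ↔ ∃ n₁ n₂ n₃ : ℤ, x = n₁ • u + n₂ • v + n₃ • w := by
  rw [← Submodule.span_int_eq_addSubgroupClosure, Submodule.mem_toAddSubgroup,
    Submodule.mem_span_triple]
  simp only [eq_comm]

theorem add_mem_closure_iff_of_involutive {F : Type*} [FunLike F V V] [AddMonoidHomClass F V V]
    {A : F} (hA : Involutive A) {s : Set V} (hs : ∀ x ∈ s, A x ∈ AddSubgroup.closure s)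
    {t : V} (ht : t ∈ AddSubgroup.closure s) (x : V) :
    A x + t ∈ AddSubgroup.closure s ↔ x ∈ AddSubgroup.closure s := by
  have hAs : ∀ y ∈ AddSubgroup.closure s, A y ∈ AddSubgroup.closure s := fun y hy =>
    (AddSubgroup.closure_le (AddSubgroup.comap (A : V →+ V) (AddSubgroup.closure s))).2
      (fun z hz => hs z hz) hy
  rw [add_mem_cancel_right ht]
  exact ⟨fun h => hA x ▸ hAs _ h, hAs x⟩

theorem exists_parity_decomposition (a b c : V) (n₁ n₂ n₃ : ℤ) :
    ∃ e₁ e₂ : ℤ, (e₁ = 0 ∨ e₁ = 1) ∧ (e₂ = 0 ∨ e₂ = 1) ∧ ∃ p q s : ℤ,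
      n₁ • a + n₂ • (b + c) + n₃ • (b - c) =
        e₁ • a + e₂ • (b + c) + p • (2 • a) + q • (2 • b) + s • (2 • c) := by
  have h2 (n : ℤ) : ∃ p e : ℤ, (e = 0 ∨ e = 1) ∧ n = 2 * p + e :=
    ⟨n / 2, n % 2, Int.emod_two_eq_zero_or_one n, (Int.mul_ediv_add_emod n 2).symm⟩
  obtain ⟨p, e₁, he₁, rfl⟩ := h2 n₁
  obtain ⟨q, e₂, he₂, hq⟩ := h2 (n₂ + n₃)
  refine ⟨e₁, e₂, he₁, he₂, p, q, n₂ - q - e₂, ?_⟩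
  rw [show n₃ = 2 * q + e₂ - n₂ by omega]
  module

end Lattice

section IsometryGroup

variable {X : Type*} [PseudoEMetricSpace X]

def isometryOrbit (Γ : Subgroup (X ≃ᵢ X)) (x : X) : Set X := {v | ∃ g ∈ Γ, g x = v}

theorem isometryOrbit_closure_subset {S : Set (X ≃ᵢ X)} {P : Set X}
    (hS : ∀ s ∈ S, ∀ y, s y ∈ P ↔ y ∈ P) {x : X} (hx : x ∈ P) :
    isometryOrbit (Subgroup.closure S) x ⊆ P := by
  suffices h : ∀ g ∈ Subgroup.closure S, ∀ y, g y ∈ P ↔ y ∈ P by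
    rintro _ ⟨g, hg, rfl⟩
    exact (h g hg x).2 hx
  intro g hg
  induction hg using Subgroup.closure_induction with
  | mem s hs => exact hS s hs
  | one => exact fun y => Iff.rfl
  | mul g h _ _ hg hh => exact fun y => (hg (h y)).trans (hh y)
  | inv g _ hg => exact fun y => by rw [← hg, IsometryEquiv.apply_inv_self]

variable [AddGroup X]

def translationSubgroup (Γ : Subgroup (X ≃ᵢ X)) : AddSubgroup X where
  carrier := {d | ∃ u ∈ Γ, ∀ x, u x = x + d}
  zero_mem' := ⟨1, Γ.one_mem, fun x => (add_zero x).symm⟩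
  add_mem' := by
    rintro d e ⟨u, hu, hud⟩ ⟨v, hv, hve⟩
    exact ⟨v * u, Γ.mul_mem hv hu, fun x => by rw [IsometryEquiv.mul_apply, hud, hve, add_assoc]⟩
  neg_mem' := by
    rintro d ⟨u, hu, hud⟩
    refine ⟨u⁻¹, Γ.inv_mem hu, fun x => ?_⟩
    rw [← u.inv_apply_self (x + -d), hud, neg_add_cancel_right]

variable {Γ : Subgroup (X ≃ᵢ X)}

theorem add_mem_isometryOrbit {x v d : X} (hv : v ∈ isometryOrbit Γ x)
    (hd : d ∈ translationSubgroup Γ) : v + d ∈ isometryOrbit Γ x := by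
  obtain ⟨g, hg, rfl⟩ := hv
  obtain ⟨u, hu, hud⟩ := hd
  exact ⟨u * g, Γ.mul_mem hu hg, hud (g x)⟩

theorem map_add_mem_translationSubgroup {F : Type*} [FunLike F X X] [AddMonoidHomClass F X X]
    {g : X ≃ᵢ X} (hg : g ∈ Γ) {A : F} (hA : Involutive A) {t : X} (hgA : ∀ x, g x = A x + t) :
    A t + t ∈ translationSubgroup Γ :=
  ⟨g * g, Γ.mul_mem hg hg, fun x => by
    rw [IsometryEquiv.mul_apply, hgA, hgA, map_add, hA, add_assoc]⟩

end IsometryGroup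

section AffineGenerators

variable {X : Type*} [PseudoEMetricSpace X] [AddCommGroup X]

theorem isometryOrbit_subset_closure_of_affine {F : Type*} [FunLike F X X]
    [AddMonoidHomClass F X X] {S : Set (X ≃ᵢ X)} {s : Set X}
    (hS : ∀ g ∈ S, ∃ A : F, Involutive A ∧ (∀ x ∈ s, A x ∈ AddSubgroup.closure s) ∧
      ∃ t ∈ AddSubgroup.closure s, ∀ x, g x = A x + t) :
    isometryOrbit (Subgroup.closure S) 0 ⊆ AddSubgroup.closure s := by
  refine isometryOrbit_closure_subset (fun g hg y => ?_) (zero_mem _)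
  obtain ⟨A, hA, hAs, t, ht, hgA⟩ := hS g hg
  rw [hgA]
  exact add_mem_closure_iff_of_involutive hA hAs ht y

theorem closure_add_sub_subset_isometryOrbit {Γ : Subgroup (X ≃ᵢ X)} {a b c : X}
    (ha : a ∈ isometryOrbit Γ 0) (hbc : b + c ∈ isometryOrbit Γ 0)
    (habc : a + b + c ∈ isometryOrbit Γ 0)
    (h2a : 2 • a ∈ translationSubgroup Γ) (h2b : 2 • b ∈ translationSubgroup Γ)
    (h2c : 2 • c ∈ translationSubgroup Γ) :
    (AddSubgroup.closure {a, b + c, b - c} : Set X) ⊆ isometryOrbit Γ 0 := by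
  intro v hv
  obtain ⟨n₁, n₂, n₃, rfl⟩ := mem_closure_triple.1 hv
  obtain ⟨e₁, e₂, he₁, he₂, p, q, s, hv⟩ := exists_parity_decomposition a b c n₁ n₂ n₃
  have hr : e₁ • a + e₂ • (b + c) ∈ isometryOrbit Γ 0 := by
    have h0 : (0 : X) ∈ isometryOrbit Γ 0 := ⟨1, Γ.one_mem, rfl⟩
    rcases he₁ with rfl | rfl <;> rcases he₂ with rfl | rfl <;>
      simp only [zero_smul, one_smul, zero_add, add_zero, ← add_assoc] <;> assumption
  rw [hv]
  exact add_mem_isometryOrbit (add_mem_isometryOrbit (add_mem_isometryOrbit hr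
    (zsmul_mem h2a p)) (zsmul_mem h2b q)) (zsmul_mem h2c s)

end AffineGenerators

theorem G6_orbit_of_origin_general
    (α β γ : ℝ)
    (a b c : EuclideanSpace ℝ (Fin 3))
    (ha : a = α • EuclideanSpace.single (0 : Fin 3) (1 : ℝ))
    (hb : b = β • EuclideanSpace.single (1 : Fin 3) (1 : ℝ))
    (hc : c = γ • EuclideanSpace.single (2 : Fin 3) (1 : ℝ))
    (A₁ A₂ A₃ : EuclideanSpace ℝ (Fin 3) ≃ₗᵢ[ℝ] EuclideanSpace ℝ (Fin 3))
    (hA₁ : ∀ (x : EuclideanSpace ℝ (Fin 3)) (i : Fin 3),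
      A₁ x i = if i = 0 then x i else -x i)
    (hA₂ : ∀ (x : EuclideanSpace ℝ (Fin 3)) (i : Fin 3),
      A₂ x i = if i = 1 then x i else -x i)
    (hA₃ : ∀ (x : EuclideanSpace ℝ (Fin 3)) (i : Fin 3),
      A₃ x i = if i = 2 then x i else -x i)
    (g₁ g₂ g₃ : EuclideanSpace ℝ (Fin 3) ≃ᵢ EuclideanSpace ℝ (Fin 3))
    (hg₁ : ∀ x, g₁ x = A₁ x + a)
    (hg₂ : ∀ x, g₂ x = A₂ x + (b + c))
    (hg₃ : ∀ x, g₃ x = A₃ x + (a + b + c))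
    (Γ : Subgroup (EuclideanSpace ℝ (Fin 3) ≃ᵢ EuclideanSpace ℝ (Fin 3)))
    (hΓ : Γ = Subgroup.closure {g₁, g₂, g₃}) :
    {v : EuclideanSpace ℝ (Fin 3) | ∃ g ∈ Γ, g 0 = v} =
      {v : EuclideanSpace ℝ (Fin 3) |
        ∃ n₁ n₂ n₃ : ℤ, v = n₁ • a + n₂ • (b + c) + n₃ • (b - c)} := by
  obtain ⟨h₁a, h₁bc, h₁cb⟩ : A₁ a = a ∧ A₁ (b + c) = -(b + c) ∧ A₁ (b - c) = -(b - c) := by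
    subst ha hb hc; simp [signFlip_apply_smul_single hA₁, sub_eq_add_neg, add_comm]
  obtain ⟨h₂a, h₂bc, h₂cb⟩ : A₂ a = -a ∧ A₂ (b + c) = b - c ∧ A₂ (b - c) = b + c := by
    subst ha hb hc; simp [signFlip_apply_smul_single hA₂, sub_eq_add_neg]
  obtain ⟨h₃a, h₃bc, h₃cb⟩ : A₃ a = -a ∧ A₃ (b + c) = -(b - c) ∧ A₃ (b - c) = -(b + c) := by
    subst ha hb hc; simp [signFlip_apply_smul_single hA₃, sub_eq_add_neg, add_comm]
  subst hΓ
  set L := AddSubgroup.closure {a, b + c, b - c}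
  obtain ⟨hLa, hLbc, hLcb⟩ : a ∈ L ∧ b + c ∈ L ∧ b - c ∈ L := by
    refine ⟨?_, ?_, ?_⟩ <;> exact AddSubgroup.subset_closure (by simp)
  apply Subset.antisymm
  · refine fun v hv => mem_closure_triple.1
      (isometryOrbit_subset_closure_of_affine (F := _ ≃ₗᵢ[ℝ] _) ?_ hv)
    rintro _ (rfl | rfl | rfl)
    · refine ⟨A₁, signFlip_involutive hA₁, ?_, a, hLa, hg₁⟩
      rintro _ (rfl | rfl | rfl) <;> simp only [h₁a, h₁bc, h₁cb, neg_mem_iff] <;> assumption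
    · refine ⟨A₂, signFlip_involutive hA₂, ?_, b + c, hLbc, hg₂⟩
      rintro _ (rfl | rfl | rfl) <;> simp only [h₂a, h₂bc, h₂cb, neg_mem_iff] <;> assumption
    · refine ⟨A₃, signFlip_involutive hA₃, ?_, a + b + c,
        add_assoc a b c ▸ add_mem hLa hLbc, hg₃⟩
      rintro _ (rfl | rfl | rfl) <;> simp only [h₃a, h₃bc, h₃cb, neg_mem_iff] <;> assumption
  · have hgen : ∀ g ∈ ({g₁, g₂, g₃} : Set _), g ∈ Subgroup.closure {g₁, g₂, g₃} :=
      fun g hg => Subgroup.subset_closure hg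
    refine fun v hv =>
      closure_add_sub_subset_isometryOrbit ?_ ?_ ?_ ?_ ?_ ?_ (mem_closure_triple.2 hv)
    · exact ⟨g₁, hgen _ (by simp), by simp [hg₁]⟩
    · exact ⟨g₂, hgen _ (by simp), by simp [hg₂]⟩
    · exact ⟨g₃, hgen _ (by simp), by simp [hg₃]⟩
    · convert map_add_mem_translationSubgroup (hgen _ (by simp)) (signFlip_involutive hA₁) hg₁
      rw [h₁a, two_nsmul]
    · convert map_add_mem_translationSubgroup (hgen _ (by simp)) (signFlip_involutive hA₂) hg₂
      rw [h₂bc]; module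
    · convert map_add_mem_translationSubgroup (hgen _ (by simp)) (signFlip_involutive hA₃) hg₃
      rw [add_assoc, map_add, h₃a, h₃bc]; module

/-- The orbit of the origin under the covering group `Γ` of a flat 3-manifold of class 𝒢₆ is the lattice generated by `a`, `b + c` and `b - c`. -/
theorem G6_orbit_of_origin
    (α β γ : ℝ) (hα : 0 < α) (hβ : 0 < β) (hγ : 0 < γ)
    (a b c : EuclideanSpace ℝ (Fin 3))
    (ha : a = α • EuclideanSpace.single (0 : Fin 3) (1 : ℝ))
    (hb : b = β • EuclideanSpace.single (1 : Fin 3) (1 : ℝ))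
    (hc : c = γ • EuclideanSpace.single (2 : Fin 3) (1 : ℝ))
    (A₁ A₂ A₃ : EuclideanSpace ℝ (Fin 3) ≃ₗᵢ[ℝ] EuclideanSpace ℝ (Fin 3))
    (hA₁ : ∀ (x : EuclideanSpace ℝ (Fin 3)) (i : Fin 3),
      A₁ x i = if i = 0 then x i else -x i)
    (hA₂ : ∀ (x : EuclideanSpace ℝ (Fin 3)) (i : Fin 3),
      A₂ x i = if i = 1 then x i else -x i)
    (hA₃ : ∀ (x : EuclideanSpace ℝ (Fin 3)) (i : Fin 3),
      A₃ x i = if i = 2 then x i else -x i)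
    (g₁ g₂ g₃ : EuclideanSpace ℝ (Fin 3) ≃ᵢ EuclideanSpace ℝ (Fin 3))
    (hg₁ : ∀ x, g₁ x = A₁ x + a)
    (hg₂ : ∀ x, g₂ x = A₂ x + (b + c))
    (hg₃ : ∀ x, g₃ x = A₃ x + (a + b + c))
    (Γ : Subgroup (EuclideanSpace ℝ (Fin 3) ≃ᵢ EuclideanSpace ℝ (Fin 3)))
    (hΓ : Γ = Subgroup.closure {g₁, g₂, g₃}) :
    {v : EuclideanSpace ℝ (Fin 3) | ∃ g ∈ Γ, g 0 = v} =
      {v : EuclideanSpace ℝ (Fin 3) |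
        ∃ n₁ n₂ n₃ : ℤ, v = n₁ • a + n₂ • (b + c) + n₃ • (b - c)} :=
  G6_orbit_of_origin_general α β γ a b c ha hb hc A₁ A₂ A₃ hA₁ hA₂ hA₃ g₁ g₂ g₃ hg₁ hg₂ hg₃ Γ hΓ
end

section
/- With Γ the 𝒢₂ covering group described in the context, the infimum, over all g ∈ Γ with g ≠ id and all x ∈ E, of the distance dist(x, g x) equals min{ ‖a‖, m }, where m = min over pairs of integers (p,q) ≠ (0,0) of ‖p b + q c‖ (the length of the shortest nonzero vector of the planar lattice generated by b and c), and this infimum is attained. In particular, the injectivity radius of E/Γ is r_inj = (1/2) min{‖a‖, m}. -/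
open scoped RealInnerProductSpace

/-!
Every element of `Γ` has the form `x ↦ Aⁿ x + n • a + v` with `n : ℤ` and `v` in the lattice
`L = ℤ b + ℤ c`, since `A` fixes `a` and acts as `-1` on `L`. The displacement
`n • a + (Aⁿ x - x + v)` of such a motion is an orthogonal sum, because `Aⁿ` is an isometry
fixing `a`; so it is at least `‖a‖` when `n ≠ 0`, while for `n = 0` the motion is the
translation by `v ≠ 0`. The bound is attained at `x = 0` by `g` and by the translation along a
shortest vector of `L`.
-/

namespace IsometryEquiv

variable {G : Type*} [AddCommGroup G] [PseudoEMetricSpace G]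

theorem zpow_apply_of_forall_apply_eq_add {t : G ≃ᵢ G} {v : G} (ht : ∀ x, t x = x + v) (n : ℤ)
    (x : G) : (t ^ n) x = x + n • v := by
  have ht_inv : ∀ x, t⁻¹ x = x - v := fun x => by
    rw [← t.inv_apply_self (x - v), ht, sub_add_cancel]
  induction n using Int.induction_on generalizing x with
  | zero => simp
  | succ n ih => rw [zpow_add_one, mul_apply, ht, ih, add_zsmul, one_zsmul]; abel
  | pred n ih => rw [zpow_sub_one, mul_apply, ht_inv, ih, sub_zsmul, one_zsmul]; abel

theorem zpow_mul_zpow_apply_of_forall_apply_eq_add {s t : G ≃ᵢ G} {u v : G}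
    (hs : ∀ x, s x = x + u) (ht : ∀ x, t x = x + v) (p q : ℤ) (x : G) :
    (s ^ p * t ^ q) x = x + (p • u + q • v) := by
  rw [mul_apply, zpow_apply_of_forall_apply_eq_add hs, zpow_apply_of_forall_apply_eq_add ht]
  abel

end IsometryEquiv

namespace LinearIsometryEquiv

variable {R E : Type*} [Ring R] [SeminormedAddCommGroup E] [Module R E] {A : E ≃ₗᵢ[R] E}

theorem zpow_apply_eq_self {a : E} (hAa : A a = a) (n : ℤ) : (A ^ n) a = a := by
  induction n using Int.induction_on with
  | zero => rfl
  | succ n ih => rw [zpow_add_one, coe_mul, Function.comp_apply, hAa, ih]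
  | pred n ih =>
    rw [zpow_sub_one, coe_mul, Function.comp_apply, coe_inv, ← hAa, symm_apply_apply, hAa, ih]

theorem zpow_apply_mem {L : AddSubgroup E} (hAL : ∀ v ∈ L, A v = -v) (n : ℤ) {v : E}
    (hv : v ∈ L) : (A ^ n) v ∈ L := by
  induction n using Int.induction_on generalizing v with
  | zero => exact hv
  | succ n ih => rw [zpow_add_one, coe_mul, Function.comp_apply, hAL v hv]; exact ih (neg_mem hv)
  | pred n ih =>
    have hAinv : A⁻¹ v = -v := by rw [coe_inv, symm_apply_eq, map_neg, hAL v hv, neg_neg]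
    rw [zpow_sub_one, coe_mul, Function.comp_apply, hAinv]; exact ih (neg_mem hv)

theorem apply_eq_neg_of_mem_closure_pair {b c v : E} (hAb : A b = -b) (hAc : A c = -c)
    (hv : v ∈ AddSubgroup.closure {b, c}) : A v = -v := by
  obtain ⟨p, q, rfl⟩ := AddSubgroup.mem_closure_pair.1 hv
  rw [map_add, map_zsmul, map_zsmul, hAb, hAc, zsmul_neg, zsmul_neg, neg_add]

end LinearIsometryEquiv

section ScrewMotion

variable {R E : Type*} [Ring R] [SeminormedAddCommGroup E] [Module R E]

def screwMotionSubgroup (A : E ≃ₗᵢ[R] E) (a : E) (L : AddSubgroup E) (hAa : A a = a)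
    (hAL : ∀ v ∈ L, A v = -v) : Subgroup (E ≃ᵢ E) where
  carrier := {h | ∃ n : ℤ, ∃ v ∈ L, ∀ x, h x = (A ^ n) x + n • a + v}
  one_mem' := ⟨0, 0, L.zero_mem, fun x => by simp⟩
  mul_mem' := by
    rintro h₁ h₂ ⟨n₁, v₁, hv₁, hh₁⟩ ⟨n₂, v₂, hv₂, hh₂⟩
    refine ⟨n₁ + n₂, (A ^ n₁) v₂ + v₁, add_mem (A.zpow_apply_mem hAL n₁ hv₂) hv₁, fun x => ?_⟩
    rw [IsometryEquiv.mul_apply, hh₂, hh₁, map_add, map_add, map_zsmul,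
      A.zpow_apply_eq_self hAa, zpow_add, LinearIsometryEquiv.coe_mul, Function.comp_apply,
      add_zsmul]
    abel
  inv_mem' := by
    rintro h ⟨n, v, hv, hh⟩
    refine ⟨-n, -(A ^ (-n)) v, neg_mem (A.zpow_apply_mem hAL (-n) hv), fun x => ?_⟩
    refine (h.symm_apply_eq).2 ?_
    rw [hh, map_add, map_add, map_neg, map_zsmul, A.zpow_apply_eq_self hAa, zpow_neg,
      LinearIsometryEquiv.coe_inv, LinearIsometryEquiv.apply_symm_apply,
      LinearIsometryEquiv.apply_symm_apply, neg_zsmul]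
    abel

end ScrewMotion

section Displacement

variable {E : Type*} [NormedAddCommGroup E] [InnerProductSpace ℝ E]

theorem inner_eq_zero_of_mem_closure_pair {a b c v : E} (hab : ⟪a, b⟫ = 0) (hac : ⟪a, c⟫ = 0)
    (hv : v ∈ AddSubgroup.closure {b, c}) : ⟪a, v⟫ = 0 := by
  obtain ⟨p, q, rfl⟩ := AddSubgroup.mem_closure_pair.1 hv
  rw [inner_add_right, ← Int.cast_smul_eq_zsmul ℝ p, ← Int.cast_smul_eq_zsmul ℝ q,
    real_inner_smul_right, real_inner_smul_right, hab, hac]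
  ring

theorem norm_le_norm_add_of_inner_eq_zero {u w : E} (h : ⟪u, w⟫ = 0) : ‖u‖ ≤ ‖u + w‖ :=
  (mul_self_le_mul_self_iff (norm_nonneg _) (norm_nonneg _)).2 <| by
    rw [norm_add_sq_eq_norm_sq_add_norm_sq_real h]
    exact le_add_of_nonneg_right (mul_self_nonneg _)

theorem norm_le_dist_zpow_apply_add {A : E ≃ₗᵢ[ℝ] E} {a v : E} (hAa : A a = a)
    (hav : ⟪a, v⟫ = 0) {n : ℤ} (hn : n ≠ 0) (x : E) :
    ‖a‖ ≤ dist x ((A ^ n) x + n • a + v) := by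
  have horth : ⟪(n : ℝ) • a, (A ^ n) x - x + v⟫ = 0 := by
    rw [real_inner_smul_left, inner_add_right, inner_sub_right, ← (A ^ n).inner_map_map a x,
      A.zpow_apply_eq_self hAa, hav]
    ring
  calc ‖a‖ ≤ ‖(n : ℝ) • a‖ := by
        rw [norm_smul, Real.norm_eq_abs, ← Int.cast_abs]
        exact le_mul_of_one_le_left (norm_nonneg _) (by exact_mod_cast Int.one_le_abs hn)
    _ ≤ ‖(n : ℝ) • a + ((A ^ n) x - x + v)‖ := norm_le_norm_add_of_inner_eq_zero horth
    _ = dist x ((A ^ n) x + n • a + v) := by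
        rw [dist_comm, dist_eq_norm, Int.cast_smul_eq_zsmul]
        congr 1
        abel

theorem min_le_dist_apply_of_mem_screwMotionSubgroup {A : E ≃ₗᵢ[ℝ] E} {a : E}
    {L : AddSubgroup E} (hAa : A a = a) (hAL : ∀ v ∈ L, A v = -v) (hLa : ∀ v ∈ L, ⟪a, v⟫ = 0)
    {m : ℝ} (hm : ∀ v ∈ L, v ≠ 0 → m ≤ ‖v‖) {h : E ≃ᵢ E}
    (hh : h ∈ screwMotionSubgroup A a L hAa hAL) (h1 : h ≠ 1) (x : E) :
    min ‖a‖ m ≤ dist x (h x) := by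
  obtain ⟨n, v, hv, hhx⟩ := hh
  rcases eq_or_ne n 0 with rfl | hn
  · have htrans : ∀ y, h y = y + v := fun y => by simp [hhx]
    have hv0 : v ≠ 0 := by
      rintro rfl
      exact h1 (IsometryEquiv.ext fun y => by simp [htrans])
    rw [htrans, dist_self_add_right]
    exact min_le_of_right_le (hm v hv hv0)
  · rw [hhx]
    exact min_le_of_left_le (norm_le_dist_zpow_apply_add hAa (hLa v hv) hn x)

end Displacement

/-- For the covering group `Γ` of a flat 3-manifold of class 𝒢₂ (generated by the screw motion `g : x ↦ A x + a` and the translations by `b` and `c`), the infimum over `h ∈ Γ`, `h ≠ 1`, and `x` of `dist x (h x)` equals `min {‖a‖, m}`, where `m` is the length of the shortest nonzero vector of the planar lattice generated by `b` and `c`, and this infimum is attained; hence the injectivity radius is `(1/2) min {‖a‖, m}`. -/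
theorem G2_injectivity_radius
    (a b c : EuclideanSpace ℝ (Fin 3))
    (hind : LinearIndependent ℝ ![a, b, c])
    (hab : ⟪a, b⟫ = 0) (hac : ⟪a, c⟫ = 0)
    (A : EuclideanSpace ℝ (Fin 3) ≃ₗᵢ[ℝ] EuclideanSpace ℝ (Fin 3))
    (hAa : A a = a) (hAb : A b = -b) (hAc : A c = -c)
    (g tb tc : EuclideanSpace ℝ (Fin 3) ≃ᵢ EuclideanSpace ℝ (Fin 3))
    (hg : ∀ x, g x = A x + a)
    (htb : ∀ x, tb x = x + b)
    (htc : ∀ x, tc x = x + c)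
    (Γ : Subgroup (EuclideanSpace ℝ (Fin 3) ≃ᵢ EuclideanSpace ℝ (Fin 3)))
    (hΓ : Γ = Subgroup.closure {g, tb, tc})
    (m : ℝ)
    (hm : IsLeast {r : ℝ | ∃ p q : ℤ, ¬(p = 0 ∧ q = 0) ∧ r = ‖p • b + q • c‖} m) :
    IsLeast {d : ℝ | ∃ h ∈ Γ, h ≠ 1 ∧ ∃ x : EuclideanSpace ℝ (Fin 3), d = dist x (h x)}
      (min ‖a‖ m) := by
  set L := AddSubgroup.closure ({b, c} : Set (EuclideanSpace ℝ (Fin 3)))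
  have hAL : ∀ v ∈ L, A v = -v := fun _ => A.apply_eq_neg_of_mem_closure_pair hAb hAc
  have hmL : ∀ v ∈ L, v ≠ 0 → m ≤ ‖v‖ := fun v hv hv0 => by
    obtain ⟨p, q, rfl⟩ := AddSubgroup.mem_closure_pair.1 hv
    exact hm.2 ⟨p, q, fun ⟨hp, hq⟩ => hv0 (by simp [hp, hq]), rfl⟩
  have hΓ_le : Γ ≤ screwMotionSubgroup A a L hAa hAL := by
    rw [hΓ, Subgroup.closure_le]
    rintro h (rfl | rfl | rfl)
    · exact ⟨1, 0, L.zero_mem, fun x => by simp [hg]⟩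
    · exact ⟨0, b, AddSubgroup.subset_closure (by simp), fun x => by simp [htb]⟩
    · exact ⟨0, c, AddSubgroup.subset_closure (by simp), fun x => by simp [htc]⟩
  refine ⟨?_, fun d ⟨h, hh, h1, x, hd⟩ => hd ▸ min_le_dist_apply_of_mem_screwMotionSubgroup hAa
    hAL (fun _ => inner_eq_zero_of_mem_closure_pair hab hac) hmL (hΓ_le hh) h1 x⟩
  have hattained : ∀ h ∈ Γ, h 0 ≠ 0 → ‖h 0‖ ∈
      {d : ℝ | ∃ h ∈ Γ, h ≠ 1 ∧ ∃ x : EuclideanSpace ℝ (Fin 3), d = dist x (h x)} :=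
    fun h hh h0 => ⟨h, hh, fun h1 => h0 (by simp [h1]), 0, (dist_zero_left _).symm⟩
  rcases le_total ‖a‖ m with ha_le | hm_le
  · have hg0 : g 0 = a := by rw [hg, map_zero, zero_add]
    rw [min_eq_left ha_le, ← hg0]
    exact hattained g (hΓ ▸ Subgroup.subset_closure (by simp)) (hg0 ▸ hind.ne_zero 0)
  · obtain ⟨p, q, hpq, rfl⟩ := hm.1
    have h0 : (tb ^ p * tc ^ q) 0 = p • b + q • c := by
      rw [IsometryEquiv.zpow_mul_zpow_apply_of_forall_apply_eq_add htb htc, zero_add]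
    have hne : p • b + q • c ≠ 0 := fun hpq0 => hpq <| LinearIndependent.pair_iff.1
      ((hind.comp Fin.succ (Fin.succ_injective 2)).restrict_scalars' ℤ) p q hpq0
    rw [min_eq_right hm_le, ← h0]
    exact hattained _ (hΓ ▸ mul_mem (zpow_mem (Subgroup.subset_closure (by simp)) p)
      (zpow_mem (Subgroup.subset_closure (by simp)) q)) (h0 ▸ hne)
end

section
/- With Γ the 𝒢₂ covering group described in the context, Γ acts freely on E: every element of Γ other than the identity has no fixed point in E. -/
/-!
Every element of `Γ` has the form `x ↦ Aⁿ x + v` and raises the height `⟪a, x⟫` by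
`n ⟪a, a⟫` with the same exponent `n`: this is true of the generators because `A` fixes `a` and
`b`, `c` are orthogonal to `a`, and it is preserved under products and inverses. A fixed point
forces `n = 0`, so the element is a translation, and a translation with a fixed point is the
identity.
-/

open scoped RealInnerProductSpace

section ScrewSubgroup

variable {E : Type*} [NormedAddCommGroup E] [InnerProductSpace ℝ E]

def screwSubgroup (A : E ≃ₗᵢ[ℝ] E) (a : E) : Subgroup (E ≃ᵢ E) where
  carrier := {h | ∃ n : ℤ, (∃ v, ∀ x, h x = (A ^ n) x + v) ∧
    ∀ x, ⟪a, h x⟫ = ⟪a, x⟫ + n * ⟪a, a⟫}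
  one_mem' := ⟨0, ⟨0, fun x => by simp⟩, fun x => by simp⟩
  mul_mem' := by
    rintro h₁ h₂ ⟨n₁, ⟨v₁, hv₁⟩, hn₁⟩ ⟨n₂, ⟨v₂, hv₂⟩, hn₂⟩
    refine ⟨n₁ + n₂, ⟨(A ^ n₁) v₂ + v₁, fun x => ?_⟩, fun x => ?_⟩
    · rw [IsometryEquiv.mul_apply, hv₂, hv₁, zpow_add, LinearIsometryEquiv.coe_mul,
        Function.comp_apply, map_add, add_assoc]
    · rw [IsometryEquiv.mul_apply, hn₁, hn₂]; push_cast; ring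
  inv_mem' := by
    rintro h ⟨n, ⟨v, hv⟩, hn⟩
    have hinv : ∀ y, (A ^ n) ((A ^ (-n)) y) = y := fun y => by
      rw [zpow_neg, LinearIsometryEquiv.coe_inv, LinearIsometryEquiv.apply_symm_apply]
    refine ⟨-n, ⟨-(A ^ (-n)) v, fun x => h.injective ?_⟩, fun x => ?_⟩
    · rw [IsometryEquiv.apply_inv_self, hv, map_add, map_neg, hinv, hinv, neg_add_cancel_right]
    · have hshift := hn (h⁻¹ x)
      rw [IsometryEquiv.apply_inv_self] at hshift
      push_cast; linarith

variable {A : E ≃ₗᵢ[ℝ] E} {a : E}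

theorem translation_mem_screwSubgroup {t : E ≃ᵢ E} {v : E} (ht : ∀ x, t x = x + v)
    (hv : ⟪a, v⟫ = 0) : t ∈ screwSubgroup A a :=
  ⟨0, ⟨v, by simpa using ht⟩, fun x => by simp [ht, inner_add_right, hv]⟩

theorem screw_mem_screwSubgroup (hA : A a = a) {g : E ≃ᵢ E} (hg : ∀ x, g x = A x + a) :
    g ∈ screwSubgroup A a := by
  refine ⟨1, ⟨a, by simpa using hg⟩, fun x => ?_⟩
  have hheight : ⟪a, A x⟫ = ⟪a, x⟫ := by simpa [hA] using A.inner_map_map a x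
  rw [hg, inner_add_right, hheight, Int.cast_one, one_mul]

theorem eq_one_of_mem_screwSubgroup_of_apply_eq (ha : a ≠ 0) {h : E ≃ᵢ E}
    (hh : h ∈ screwSubgroup A a) {x : E} (hx : h x = x) : h = 1 := by
  obtain ⟨n, ⟨v, hv⟩, hn⟩ := hh
  have hn0 : n = 0 := by
    have hshift := hn x
    rw [hx, left_eq_add, mul_eq_zero, inner_self_eq_zero] at hshift
    exact_mod_cast hshift.resolve_right ha
  have hv0 : v = 0 := by simpa [hn0, hx] using hv x
  ext y
  simp [hv, hn0, hv0]

end ScrewSubgroup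

theorem G2_acts_freely_general
    (a b c : EuclideanSpace ℝ (Fin 3))
    (hind : LinearIndependent ℝ ![a, b, c])
    (hab : ⟪a, b⟫ = 0) (hac : ⟪a, c⟫ = 0)
    (A : EuclideanSpace ℝ (Fin 3) ≃ₗᵢ[ℝ] EuclideanSpace ℝ (Fin 3))
    (hAa : A a = a)
    (g tb tc : EuclideanSpace ℝ (Fin 3) ≃ᵢ EuclideanSpace ℝ (Fin 3))
    (hg : ∀ x, g x = A x + a)
    (htb : ∀ x, tb x = x + b)
    (htc : ∀ x, tc x = x + c)
    (Γ : Subgroup (EuclideanSpace ℝ (Fin 3) ≃ᵢ EuclideanSpace ℝ (Fin 3)))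
    (hΓ : Γ = Subgroup.closure {g, tb, tc}) :
    ∀ h ∈ Γ, h ≠ 1 → ∀ x : EuclideanSpace ℝ (Fin 3), h x ≠ x := by
  have hΓ_le : Γ ≤ screwSubgroup A a := by
    rw [hΓ, Subgroup.closure_le]
    rintro _ (rfl | rfl | rfl)
    exacts [screw_mem_screwSubgroup hAa hg, translation_mem_screwSubgroup htb hab,
      translation_mem_screwSubgroup htc hac]
  intro h hh hne x hx
  exact hne (eq_one_of_mem_screwSubgroup_of_apply_eq (hind.ne_zero 0) (hΓ_le hh) hx)

/-- The covering group `Γ` of a flat 3-manifold of class 𝒢₂ acts freely on Euclidean 3-space: every element of `Γ` other than the identity has no fixed point. -/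
theorem G2_acts_freely
    (a b c : EuclideanSpace ℝ (Fin 3))
    (hind : LinearIndependent ℝ ![a, b, c])
    (hab : ⟪a, b⟫ = 0) (hac : ⟪a, c⟫ = 0)
    (A : EuclideanSpace ℝ (Fin 3) ≃ₗᵢ[ℝ] EuclideanSpace ℝ (Fin 3))
    (hAa : A a = a) (hAb : A b = -b) (hAc : A c = -c)
    (g tb tc : EuclideanSpace ℝ (Fin 3) ≃ᵢ EuclideanSpace ℝ (Fin 3))
    (hg : ∀ x, g x = A x + a)
    (htb : ∀ x, tb x = x + b)
    (htc : ∀ x, tc x = x + c)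
    (Γ : Subgroup (EuclideanSpace ℝ (Fin 3) ≃ᵢ EuclideanSpace ℝ (Fin 3)))
    (hΓ : Γ = Subgroup.closure {g, tb, tc}) :
    ∀ h ∈ Γ, h ≠ 1 → ∀ x : EuclideanSpace ℝ (Fin 3), h x ≠ x :=
  G2_acts_freely_general a b c hind hab hac A hAa g tb tc hg htb htc Γ hΓ
end
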